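/- Let M and J be bounded self-adjoint operators and Φ₁, …, Φ_n (n ≥ 1) bounded operators on a complex Hilbert space H. For m ≥ 1, a real c and a bounded operator B, set K^{(m)}(cM, B) := ∫_{Δ_m} exp(i(1−u₁)cM) B exp(i(u₁−u₂)cM) B ⋯ B exp(iu_m cM) du (m copies of B), and for N ≥ 1 and bounded operators c₁,…,c_N set K^{(N)}(M : c₁,…,c_N) := ∫_{Δ_N} exp(i(1−u₁)M) c₁ exp(i(u₁−u₂)M) c₂ ⋯ c_N exp(iu_N M) du. Let α₁, …, α_{n+1} be positive integers, put σ_j := α₁ + ⋯ + α_j + j for 1 ≤ j ≤ n+1 and N := σ_{n+1} − 1, and define c_m := Φ_j if m = σ_j for some j ≤ n, and c_m := J otherwise. Then, with w₀ := 1: K^{(N)}(M : c₁,…,c_N) = ∫_{Δ_n} (∏_{j=1}^{n} (w_{j−1} − w_j)^{α_j}) · w_n^{α_{n+1}} · K^{(α₁)}((1−w₁)M, J) Φ₁ K^{(α₂)}((w₁−w₂)M, J) Φ₂ ⋯ Φ_n K^{(α_{n+1})}(w_n M, J) dw. (The paper's change-of-variables proposition for Duhamel simplex kernels with insertions, stated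 for bounded M; the inner kernels K^{(α_j)} have M scaled by the increment of w but the same unscaled J's.) -/

import Mathlib

open MeasureTheory

/-- The simplex `Δ_n = {u ∈ ℝⁿ : 1 ≥ u₁ ≥ u₂ ≥ ⋯ ≥ u_n ≥ 0}`. -/
def simplex (n : ℕ) : Set (Fin n → ℝ) :=
  {u | (∀ i, u i ∈ Set.Icc (0:ℝ) 1) ∧ ∀ i j : Fin n, i ≤ j → u j ≤ u i}

variable {H : Type*} [NormedAddCommGroup H] [InnerProductSpace ℂ H] [CompleteSpace H]

/-- The ordered product `exp(i(1−u₁)M) c₁ exp(i(u₁−u₂)M) c₂ ⋯ c_n exp(iu_n M)`. -/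
noncomputable def duhamelIntegrand {n : ℕ} (M : H →L[ℂ] H) (c : Fin n → (H →L[ℂ] H))
    (u : Fin n → ℝ) : H →L[ℂ] H :=
  NormedSpace.exp
      ((Complex.I * ((1 - (if h : 0 < n then u ⟨0, h⟩ else 0) : ℝ) : ℂ)) • M) *
    (List.ofFn fun m : Fin n =>
      c m *
        NormedSpace.exp
          ((Complex.I *
            ((u m - (if h : (m : ℕ) + 1 < n then u ⟨(m : ℕ) + 1, h⟩ else 0) : ℝ) : ℂ)) •
              M)).prod

/-- The Duhamel simplex kernel `K^{(n)}(M : c₁,…,c_n)`; taking all `cᵢ = B` gives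
`K^{(n)}(M, B)`, and `K^{(n)}(aM, B)` is obtained by scaling `M`. -/
noncomputable def duhamelKernel (n : ℕ) (M : H →L[ℂ] H) (c : Fin n → (H →L[ℂ] H)) :
    H →L[ℂ] H :=
  ∫ u in simplex n, duhamelIntegrand M c u

/-- `σ_j = α₁ + ⋯ + α_j + j` (for `j = 1, …, n+1`, indexed here by `Fin (n+1)`). -/
def sigmaIdx {n : ℕ} (α : Fin (n + 1) → ℕ) (j : Fin (n + 1)) : ℕ :=
  (∑ i ∈ Finset.Iic j, α i) + (j : ℕ) + 1

/-!
Write `K_t(c₁, …, c_k)` for the kernel over the simplex of height `t`. By Fubini over the first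
coordinate it satisfies `K_t(c :: cs) = ∫₀ᵗ e^{i(t-s)M} c K_s(cs) ds`, and exchanging the order of
integration over a triangle turns this into the convolution identity
`K_t(as ++ b :: cs) = ∫₀ᵗ K_{t-s}(as) b K_s(cs) ds`. Cutting the word `c₁ ⋯ c_N` at the
insertions `Φ_j` therefore writes `K_1(c)` as the integral over `Δ_n` of
`K_{1-w₁}(J^{α₁}) Φ₁ K_{w₁-w₂}(J^{α₂}) ⋯ Φ_n K_{w_n}(J^{α_{n+1}})`, and the substitution
`s ↦ a s` gives `K_a(J^α)(M) = a^α K_1(J^α)(aM)`, which produces the weights.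
-/

open Set

noncomputable section

def scaledSimplex (n : ℕ) (t : ℝ) : Set (Fin n → ℝ) :=
  {u | (∀ i, u i ∈ Icc (0:ℝ) t) ∧ ∀ i j : Fin n, i ≤ j → u j ≤ u i}

lemma isCompact_scaledSimplex (n : ℕ) (t : ℝ) : IsCompact (scaledSimplex n t) := by
  refine (isCompact_univ_pi fun _ => isCompact_Icc (a := (0:ℝ)) (b := t)).of_isClosed_subset ?_
    fun u hu i _ => hu.1 i
  simp only [scaledSimplex, ofPred_and, ofPred_forall]
  exact (isClosed_iInter fun i => isClosed_Icc.preimage (continuous_apply i)).inter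
    (isClosed_iInter fun i => isClosed_iInter fun j => isClosed_iInter fun _ =>
      isClosed_le (continuous_apply j) (continuous_apply i))

lemma cons_mem_scaledSimplex_iff {n : ℕ} {t s : ℝ} {v : Fin n → ℝ} :
    Fin.cons s v ∈ scaledSimplex (n + 1) t ↔ s ∈ Icc 0 t ∧ v ∈ scaledSimplex n s := by
  simp only [scaledSimplex, mem_ofPred_eq, Fin.forall_fin_succ, Fin.cons_zero, Fin.cons_succ,
    le_refl, implies_true, Fin.zero_le, true_and, Fin.succ_le_succ_iff, mem_Icc,
    Fin.le_zero_iff, Fin.succ_ne_zero, false_implies, true_implies]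
  constructor
  · rintro ⟨⟨hs, hv⟩, hvs, hvv⟩
    exact ⟨hs, fun i => ⟨(hv i).1, hvs i⟩, hvv⟩
  · rintro ⟨hs, hv, hvv⟩
    exact ⟨⟨hs, fun i => ⟨(hv i).1, (hv i).2.trans hs.2⟩⟩, fun i => (hv i).2, hvv⟩

section VectorValued

variable {E : Type*} [NormedAddCommGroup E] [NormedSpace ℝ E]

lemma setIntegral_scaledSimplex_succ {n : ℕ} {t : ℝ} {F : (Fin (n + 1) → ℝ) → E}
    (hF : Continuous F) :
    ∫ u in scaledSimplex (n + 1) t, F u =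
      ∫ s in Icc 0 t, ∫ v in scaledSimplex n s, F (Fin.cons s v) := by
  set e := (MeasurableEquiv.piFinSuccAbove (fun _ : Fin (n + 1) => ℝ) 0).symm
  have he : MeasurePreserving e := (volume_preserving_piFinSuccAbove _ 0).symm
  have he_apply : ∀ p, e p = Fin.cons p.1 p.2 := fun p => by
    simp [e, Fin.insertNthEquiv, Fin.insertNth_zero']
  set A := e ⁻¹' scaledSimplex (n + 1) t
  have hA : ∀ s v, (s, v) ∈ A ↔ s ∈ Icc 0 t ∧ v ∈ scaledSimplex n s := fun s v => by
    simp only [A, mem_preimage, he_apply, cons_mem_scaledSimplex_iff]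
  have hAm : MeasurableSet A :=
    (isCompact_scaledSimplex _ _).isClosed.measurableSet.preimage e.measurable
  have hint : IntegrableOn (fun p => F (e p)) A :=
    (he.integrableOn_comp_preimage e.measurableEmbedding).2
      (hF.continuousOn.integrableOn_compact (isCompact_scaledSimplex _ _))
  have hslice : ∀ s v, A.indicator (fun p => F (e p)) (s, v) = (Icc 0 t).indicator
      (fun s => (scaledSimplex n s).indicator (fun v => F (Fin.cons s v)) v) s := fun s v => by
    by_cases hs : s ∈ Icc 0 t <;> by_cases hv : v ∈ scaledSimplex n s <;>
      simp [indicator, hA, hs, hv, he_apply]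
  rw [← he.setIntegral_preimage_emb e.measurableEmbedding, ← integral_indicator hAm,
    Measure.volume_eq_prod, integral_prod _ (hint.integrable_indicator hAm),
    ← integral_indicator measurableSet_Icc]
  congr 1 with s
  by_cases hs : s ∈ Icc 0 t
  · simp [hslice, hs, integral_indicator (isCompact_scaledSimplex n s).isClosed.measurableSet]
  · simp [hslice, hs]

lemma intervalIntegral_triangle_swap {f : ℝ → ℝ → E} (hf : Continuous (Function.uncurry f))
    {t : ℝ} (ht : 0 ≤ t) :
    ∫ r in (0:ℝ)..t, ∫ s in (0:ℝ)..r, f r s = ∫ s in (0:ℝ)..t, ∫ r in s..t, f r s := by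
  set g : ℝ → ℝ → E := fun r => {s | s ≤ r}.indicator (f r)
  have hg : Function.uncurry g = {p : ℝ × ℝ | p.2 ≤ p.1}.indicator (Function.uncurry f) := by
    ext ⟨r, s⟩; simp [g, indicator]
  have hint : IntegrableOn (Function.uncurry g) (uIoc 0 t ×ˢ uIoc 0 t) := by
    rw [hg]
    refine ((hf.continuousOn.integrableOn_compact (isCompact_Icc.prod isCompact_Icc)).mono_set
      (prod_mono uIoc_subset_uIcc uIoc_subset_uIcc)).indicator ?_
    exact (isClosed_le continuous_snd continuous_fst).measurableSet
  calc ∫ r in (0:ℝ)..t, ∫ s in (0:ℝ)..r, f r s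
      = ∫ r in (0:ℝ)..t, ∫ s in (0:ℝ)..t, g r s := by
        refine intervalIntegral.integral_congr fun r hr => ?_
        rw [uIcc_of_le ht] at hr
        exact (intervalIntegral.integral_indicator hr).symm
    _ = ∫ s in (0:ℝ)..t, ∫ r in (0:ℝ)..t, g r s := intervalIntegral_intervalIntegral_swap hint
    _ = ∫ s in (0:ℝ)..t, ∫ r in s..t, f r s := by
        refine intervalIntegral.integral_congr fun s hs => ?_
        rw [uIcc_of_le ht] at hs
        have hg' : (fun r => g r s) = (Ici s).indicator (fun r => f r s) := by
          ext r; simp [g, indicator]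
        rw [hg', intervalIntegral.integral_of_le ht, intervalIntegral.integral_of_le hs.2,
          setIntegral_indicator measurableSet_Ici,
          setIntegral_congr_set ((ae_eq_refl _).inter Ioi_ae_eq_Ici.symm), Ioc_inter_Ioi,
          max_eq_right hs.1]

end VectorValued

lemma continuous_list_prod_ofFn {M X : Type*} [Monoid M] [TopologicalSpace M] [ContinuousMul M]
    [TopologicalSpace X] {n : ℕ} {f : Fin n → X → M} (hf : ∀ i, Continuous (f i)) :
    Continuous fun x => (List.ofFn fun i => f i x).prod := by
  simp only [List.ofFn_eq_map]
  exact continuous_list_prod _ fun i _ => hf i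

lemma mul_prod_ofFn_mul_succ {M : Type*} [Monoid M] :
    ∀ {n : ℕ} (f : Fin (n + 1) → M) (g : Fin n → M),
      f 0 * (List.ofFn fun m => g m * f m.succ).prod =
        (List.ofFn fun m => f m.castSucc * g m).prod * f (Fin.last n)
  | 0, f, g => by simp
  | n + 1, f, g => by
    simp only [List.ofFn_succ, List.prod_cons, Fin.castSucc_zero, ← Fin.succ_castSucc,
      ← Fin.succ_last, mul_assoc]
    rw [mul_prod_ofFn_mul_succ (fun m => f m.succ) (fun m => g m.succ)]

lemma prod_smul_prod_ofFn {R A : Type*} [CommMonoid R] [Monoid A] [MulAction R A]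
    [IsScalarTower R A A] [SMulCommClass R A A] :
    ∀ {n : ℕ} (r : Fin n → R) (f : Fin n → A),
      (∏ j, r j) • (List.ofFn f).prod = (List.ofFn fun j => r j • f j).prod
  | 0, r, f => by simp
  | n + 1, r, f => by
    rw [List.ofFn_succ, List.ofFn_succ, List.prod_cons, List.prod_cons, Fin.prod_univ_succ,
      ← smul_mul_smul_comm, prod_smul_prod_ofFn]

section IterDuhamel

variable {A : Type*} [NormedRing A] [NormedAlgebra ℝ A]

lemma intervalIntegral_const_mul_of_intervalIntegrable [CompleteSpace A] {f : ℝ → A} {a b : ℝ}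
    (hf : IntervalIntegrable f volume a b) (c : A) :
    ∫ s in a..b, c * f s = c * ∫ s in a..b, f s := by
  simpa using (ContinuousLinearMap.mul ℝ A c).intervalIntegral_comp_comm hf

lemma intervalIntegral_mul_const_of_intervalIntegrable [CompleteSpace A] {f : ℝ → A} {a b : ℝ}
    (hf : IntervalIntegrable f volume a b) (c : A) :
    ∫ s in a..b, f s * c = (∫ s in a..b, f s) * c := by
  simpa using ((ContinuousLinearMap.mul ℝ A).flip c).intervalIntegral_comp_comm hf

def iterDuhamel (e : ℝ → A) : List A → ℝ → A
  | [], t => e t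
  | c :: cs, t => ∫ s in (0:ℝ)..t, e (t - s) * c * iterDuhamel e cs s

variable {e : ℝ → A}

lemma continuous_iterDuhamel (he : Continuous e) : ∀ cs : List A, Continuous (iterDuhamel e cs)
  | [] => he
  | c :: cs => by
    have hcs := continuous_iterDuhamel he cs
    exact intervalIntegral.continuous_parametric_intervalIntegral_of_continuous
      (f := fun t s => e (t - s) * c * iterDuhamel e cs s) (by fun_prop) continuous_id

lemma iterDuhamel_mul (a : ℝ) : ∀ (cs : List A) (t : ℝ),
    iterDuhamel e cs (a * t) = a ^ cs.length • iterDuhamel (fun s => e (a * s)) cs t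
  | [], t => by simp [iterDuhamel]
  | c :: cs, t => by
    simp only [iterDuhamel, List.length_cons]
    conv_lhs => rw [← mul_zero a, ← intervalIntegral.smul_integral_comp_mul_left]
    simp_rw [iterDuhamel_mul a cs, ← mul_sub, mul_smul_comm, intervalIntegral.integral_smul,
      smul_smul, pow_succ']

lemma iterDuhamel_append_cons [CompleteSpace A] (he : Continuous e) (b : A) (cs : List A) :
    ∀ (as : List A) {t : ℝ}, 0 ≤ t →
      iterDuhamel e (as ++ b :: cs) t =
        ∫ s in (0:ℝ)..t, iterDuhamel e as (t - s) * b * iterDuhamel e cs s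
  | [], _, _ => rfl
  | a :: as, t, ht => by
    have has := continuous_iterDuhamel he as
    have hcs := continuous_iterDuhamel he cs
    calc iterDuhamel e (a :: as ++ b :: cs) t
        = ∫ r in (0:ℝ)..t, ∫ s in (0:ℝ)..r,
            e (t - r) * a * (iterDuhamel e as (r - s) * b * iterDuhamel e cs s) := by
          rw [List.cons_append, iterDuhamel]
          refine intervalIntegral.integral_congr fun r hr => ?_
          rw [uIcc_of_le ht] at hr
          rw [iterDuhamel_append_cons he b cs as hr.1,
            intervalIntegral_const_mul_of_intervalIntegrable
              (Continuous.intervalIntegrable (by fun_prop) _ _)]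
      _ = ∫ s in (0:ℝ)..t, ∫ r in s..t,
            e (t - r) * a * (iterDuhamel e as (r - s) * b * iterDuhamel e cs s) :=
          intervalIntegral_triangle_swap (by fun_prop) ht
      _ = ∫ s in (0:ℝ)..t, iterDuhamel e (a :: as) (t - s) * b * iterDuhamel e cs s := by
          refine intervalIntegral.integral_congr fun s _ => ?_
          have hshift : ∀ r, e (t - r) * a * iterDuhamel e as (r - s) =
              e (t - s - (r - s)) * a * iterDuhamel e as (r - s) := fun r => by ring_nf
          simp only [iterDuhamel, ← mul_assoc]
          rw [intervalIntegral_mul_const_of_intervalIntegrable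
              (Continuous.intervalIntegrable (by fun_prop) _ _),
            intervalIntegral_mul_const_of_intervalIntegrable
              (Continuous.intervalIntegrable (by fun_prop) _ _)]
          simp_rw [hshift]
          rw [intervalIntegral.integral_comp_sub_right
            (fun r => e (t - s - r) * a * iterDuhamel e as r), sub_self]

end IterDuhamel

def interleave {α : Type*} {n : ℕ} (L : Fin (n + 1) → List α) (b : Fin n → α) : List α :=
  (List.ofFn fun j : Fin n => L j.castSucc ++ [b j]).flatten ++ L (Fin.last n)

lemma interleave_succ {α : Type*} {n : ℕ} (L : Fin (n + 2) → List α) (b : Fin (n + 1) → α) :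
    interleave L b = L 0 ++ b 0 :: interleave (Fin.tail L) (Fin.tail b) := by
  simp [interleave, List.ofFn_succ, Fin.tail, Fin.succ_last]

lemma interleave_nil {α : Type*} : ∀ {n : ℕ} (c : Fin n → α),
    interleave (fun _ => []) c = List.ofFn c
  | 0, _ => rfl
  | n + 1, c => by
    rw [interleave_succ, List.ofFn_succ, List.nil_append]
    exact congrArg (c 0 :: ·) (interleave_nil (Fin.tail c))

/-- The lengths of the `n + 1` intervals into which `t ≥ w 0 ≥ ⋯ ≥ w (n - 1) ≥ 0` cut `[0, t]`. -/
def simplexGap {n : ℕ} (t : ℝ) (w : Fin n → ℝ) (k : Fin (n + 1)) : ℝ :=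
  (if h : 0 < (k : ℕ) then w ⟨k - 1, by omega⟩ else t) - (if h : (k : ℕ) < n then w ⟨k, h⟩ else 0)

lemma continuous_simplexGap {n : ℕ} (t : ℝ) (k : Fin (n + 1)) :
    Continuous fun w : Fin n → ℝ => simplexGap t w k := by
  unfold simplexGap
  split_ifs <;> fun_prop

lemma simplexGap_zero {n : ℕ} (t : ℝ) (w : Fin n → ℝ) :
    simplexGap t w 0 = t - (if h : 0 < n then w ⟨0, h⟩ else 0) := by
  simp only [simplexGap, Fin.val_zero]
  split_ifs <;> rfl

lemma simplexGap_succ {n : ℕ} (t : ℝ) (w : Fin n → ℝ) (m : Fin n) :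
    simplexGap t w m.succ = w m - (if h : (m : ℕ) + 1 < n then w ⟨(m : ℕ) + 1, h⟩ else 0) := by
  simp only [simplexGap, Fin.val_succ]
  split_ifs <;> first | rfl | omega

lemma simplexGap_castSucc {n : ℕ} (t : ℝ) (w : Fin n → ℝ) (j : Fin n) :
    simplexGap t w j.castSucc =
      (if _h : 0 < (j : ℕ) then w ⟨(j : ℕ) - 1, by omega⟩ else t) - w j := by
  simp [simplexGap]

lemma simplexGap_last {n : ℕ} (hn : 1 ≤ n) (t : ℝ) (w : Fin n → ℝ) :
    simplexGap t w (Fin.last n) = w ⟨n - 1, by omega⟩ := by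
  simp [simplexGap, show 0 < n by omega]

lemma simplexGap_cons_zero {n : ℕ} (t s : ℝ) (v : Fin n → ℝ) :
    simplexGap t (Fin.cons s v : Fin (n + 1) → ℝ) 0 = t - s := by
  simp [simplexGap]

lemma simplexGap_cons_succ {n : ℕ} (t s : ℝ) (v : Fin n → ℝ) (k : Fin (n + 1)) :
    simplexGap t (Fin.cons s v : Fin (n + 1) → ℝ) k.succ = simplexGap s v k := by
  rcases k with ⟨_ | k, hk⟩ <;> simp only [simplexGap, Fin.val_succ] <;> split_ifs <;>
    first | rfl | omega

section BlockIntegrand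

variable {A : Type*} [NormedRing A] [NormedAlgebra ℝ A] {e : ℝ → A}

def blockIntegrand (e : ℝ → A) {n : ℕ} (L : Fin (n + 1) → List A) (b : Fin n → A) (t : ℝ)
    (w : Fin n → ℝ) : A :=
  (List.ofFn fun j : Fin n =>
      iterDuhamel e (L j.castSucc) (simplexGap t w j.castSucc) * b j).prod *
    iterDuhamel e (L (Fin.last n)) (simplexGap t w (Fin.last n))

lemma continuous_blockIntegrand (he : Continuous e) {n : ℕ} (L : Fin (n + 1) → List A)
    (b : Fin n → A) (t : ℝ) : Continuous (blockIntegrand e L b t) :=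
  (continuous_list_prod_ofFn fun _ =>
      ((continuous_iterDuhamel he _).comp (continuous_simplexGap t _)).mul continuous_const).mul
    ((continuous_iterDuhamel he _).comp (continuous_simplexGap t _))

lemma blockIntegrand_cons {n : ℕ} (L : Fin (n + 2) → List A) (b : Fin (n + 1) → A)
    (t s : ℝ) (v : Fin n → ℝ) :
    blockIntegrand e L b t (Fin.cons s v) =
      iterDuhamel e (L 0) (t - s) * b 0 * blockIntegrand e (Fin.tail L) (Fin.tail b) s v := by
  simp only [blockIntegrand, List.ofFn_succ, List.prod_cons, Fin.castSucc_zero,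
    simplexGap_cons_zero, ← Fin.succ_castSucc, simplexGap_cons_succ, ← Fin.succ_last, mul_assoc]
  rfl

theorem setIntegral_blockIntegrand [CompleteSpace A] (he : Continuous e) :
    ∀ {n : ℕ} (L : Fin (n + 1) → List A) (b : Fin n → A) {t : ℝ}, 0 ≤ t →
      ∫ w in scaledSimplex n t, blockIntegrand e L b t w = iterDuhamel e (interleave L b) t
  | 0, L, b, t, _ => by
    simp [scaledSimplex, blockIntegrand, simplexGap, interleave, measureReal_def, volume_pi]
  | n + 1, L, b, t, ht => by
    rw [setIntegral_scaledSimplex_succ (continuous_blockIntegrand he L b t),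
      integral_Icc_eq_integral_Ioc, ← intervalIntegral.integral_of_le ht, interleave_succ,
      iterDuhamel_append_cons he _ _ _ ht]
    refine intervalIntegral.integral_congr fun s hs => ?_
    rw [uIcc_of_le ht] at hs
    simp only [blockIntegrand_cons]
    rw [integral_const_mul_of_integrable
      ((continuous_blockIntegrand he _ _ s).continuousOn.integrableOn_compact
        (isCompact_scaledSimplex n s)), setIntegral_blockIntegrand he _ _ hs.1]

end BlockIntegrand

lemma sigmaIdx_zero {n : ℕ} (α : Fin (n + 1) → ℕ) : sigmaIdx α 0 = α 0 + 1 := by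
  have hIic : Finset.Iic (0 : Fin (n + 1)) = {0} := by ext; simp
  simp [sigmaIdx, hIic]

lemma sigmaIdx_succ {n : ℕ} (α : Fin (n + 2) → ℕ) (k : Fin (n + 1)) :
    sigmaIdx α k.succ = α 0 + 1 + sigmaIdx (Fin.tail α) k := by
  have hIic : Finset.Iic k.succ = (Finset.Ioc 0 k.succ).cons 0 Finset.left_notMem_Ioc := by
    rw [← Finset.Icc_eq_cons_Ioc (Fin.zero_le _), Finset.Iic_eq_Icc, bot_eq_zero]
  simp only [sigmaIdx, hIic, Finset.sum_cons, ← Fin.map_succEmb_Iic, Finset.sum_map, Fin.val_succ,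
    Fin.coe_succEmb, Fin.tail]
  ring

lemma sigmaIdx_zero_lt {n : ℕ} (α : Fin (n + 1) → ℕ) (j : Fin (n + 1)) :
    α 0 < sigmaIdx α j := by
  have := Finset.single_le_sum (fun i _ => Nat.zero_le (α i)) (Finset.mem_Iic.2 (Fin.zero_le j))
  unfold sigmaIdx
  omega

lemma ofFn_eq_interleave_replicate {A : Type*} (J : A) :
    ∀ {n N : ℕ} (Φ : Fin n → A) (α : Fin (n + 1) → ℕ) (c : Fin N → A),
      N + 1 = sigmaIdx α (Fin.last n) →
      (∀ (j : Fin n) (m : Fin N), (m : ℕ) + 1 = sigmaIdx α j.castSucc → c m = Φ j) →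
      (∀ m : Fin N, (∀ j : Fin n, (m : ℕ) + 1 ≠ sigmaIdx α j.castSucc) → c m = J) →
      List.ofFn c = interleave (fun j => List.replicate (α j) J) Φ
  | 0, N, Φ, α, c, hN, _, hc2 => by
    rw [Fin.last_zero, sigmaIdx_zero] at hN
    simp only [interleave, List.ofFn_zero, List.flatten_nil, List.nil_append, Fin.last_zero,
      List.eq_replicate_iff, List.length_ofFn, List.forall_mem_ofFn_iff]
    exact ⟨by omega, fun m => hc2 m finZeroElim⟩
  | n + 1, N, Φ, α, c, hN, hc1, hc2 => by
    rw [← Fin.succ_last, sigmaIdx_succ] at hN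
    have := sigmaIdx_zero_lt (Fin.tail α) (Fin.last n)
    obtain ⟨N, rfl⟩ : ∃ N', N = α 0 + 1 + N' := ⟨N - (α 0 + 1), by omega⟩
    have hJs : List.ofFn (fun i : Fin (α 0) => c (Fin.castLE (by omega) i.castSucc)) =
        List.replicate (α 0) J := by
      simp only [List.eq_replicate_iff, List.length_ofFn, List.forall_mem_ofFn_iff, true_and]
      intro i
      refine hc2 _ fun j => ?_
      have := sigmaIdx_zero_lt α j.castSucc
      simp only [Fin.val_castLE, Fin.val_castSucc]
      omega
    have hΦ : c (Fin.castLE (by omega) (Fin.last (α 0))) = Φ 0 :=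
      hc1 0 _ (by simp [sigmaIdx_zero])
    have hrest : List.ofFn (fun i : Fin N => c (Fin.natAdd (α 0 + 1) i)) =
        interleave (fun j => List.replicate (Fin.tail α j) J) (Fin.tail Φ) := by
      refine ofFn_eq_interleave_replicate J _ _ _ (by omega) (fun j m hm => ?_) (fun m hm => ?_)
      · refine hc1 j.succ _ ?_
        rw [← Fin.succ_castSucc, sigmaIdx_succ, Fin.val_natAdd, ← hm]
        ring
      · refine hc2 _ (Fin.cases ?_ fun j => ?_)
        · rw [Fin.castSucc_zero, sigmaIdx_zero, Fin.val_natAdd]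
          omega
        · rw [← Fin.succ_castSucc, sigmaIdx_succ, Fin.val_natAdd]
          have := hm j
          omega
    rw [List.ofFn_add, List.ofFn_succ', hJs, hΦ, hrest, interleave_succ, List.concat_eq_append,
      List.append_assoc, List.singleton_append]
    rfl

def propagator (M : H →L[ℂ] H) (t : ℝ) : H →L[ℂ] H :=
  NormedSpace.exp ((Complex.I * (t : ℂ)) • M)

lemma continuous_propagator (M : H →L[ℂ] H) : Continuous (propagator M) :=
  (differentiable_exp_smul_const ℂ M).continuous.comp (by fun_prop)

lemma propagator_mul (M : H →L[ℂ] H) (a t : ℝ) : propagator M (a * t) = propagator (a • M) t := by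
  simp only [propagator, ← Complex.coe_smul, smul_smul]
  congr 2
  push_cast
  ring

lemma duhamelIntegrand_eq_blockIntegrand (M : H →L[ℂ] H) {n : ℕ} (c : Fin n → H →L[ℂ] H)
    (u : Fin n → ℝ) :
    duhamelIntegrand M c u = blockIntegrand (propagator M) (fun _ => []) c 1 u :=
  calc duhamelIntegrand M c u
      = propagator M (simplexGap 1 u 0) *
          (List.ofFn fun m => c m * propagator M (simplexGap 1 u m.succ)).prod := by
        simp only [duhamelIntegrand, propagator, simplexGap_zero, simplexGap_succ]
    _ = _ := mul_prod_ofFn_mul_succ (fun k => propagator M (simplexGap 1 u k)) c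

lemma duhamelKernel_eq_iterDuhamel (M : H →L[ℂ] H) {n : ℕ} (c : Fin n → H →L[ℂ] H) :
    duhamelKernel n M c = iterDuhamel (propagator M) (List.ofFn c) 1 := by
  simp only [duhamelKernel, duhamelIntegrand_eq_blockIntegrand, ← interleave_nil c]
  exact setIntegral_blockIntegrand (continuous_propagator M) _ _ zero_le_one

lemma smul_duhamelKernel_smul (M J : H →L[ℂ] H) (a : ℕ) (x : ℝ) :
    x ^ a • duhamelKernel a (x • M) (fun _ => J) =
      iterDuhamel (propagator M) (List.replicate a J) x := by
  have h := iterDuhamel_mul (e := propagator M) x (List.replicate a J) 1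
  simp only [mul_one, propagator_mul, List.length_replicate] at h
  rw [h, duhamelKernel_eq_iterDuhamel, List.ofFn_const]

end

/-- The change-of-variables identity for Duhamel simplex kernels with insertions:
with `N = σ_{n+1} − 1` and `c_m = Φ_j` if `m = σ_j` (for some `j ≤ n`), `c_m = J` otherwise,
`K^{(N)}(M : c₁,…,c_N)` equals the integral over `Δ_n` of
`(∏_j (w_{j−1}−w_j)^{α_j}) w_n^{α_{n+1}} K^{(α₁)}((1−w₁)M, J) Φ₁ ⋯ Φ_n K^{(α_{n+1})}(w_n M, J)`
(with `w₀ = 1`, and each inner kernel having `M` scaled by the increment of `w` but the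
unscaled `J`'s). -/
theorem duhamelKernel_change_of_variables
    (n : ℕ) (hn : 1 ≤ n)
    (M J : H →L[ℂ] H)
    (Φ : Fin n → (H →L[ℂ] H))
    (α : Fin (n + 1) → ℕ)
    (N : ℕ) (hN : N + 1 = sigmaIdx α (Fin.last n))
    (c : Fin N → (H →L[ℂ] H))
    (hc1 : ∀ (j : Fin n) (m : Fin N), (m : ℕ) + 1 = sigmaIdx α (Fin.castSucc j) → c m = Φ j)
    (hc2 : ∀ m : Fin N, (∀ j : Fin n, (m : ℕ) + 1 ≠ sigmaIdx α (Fin.castSucc j)) → c m = J) :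
    duhamelKernel N M c =
      ∫ w in simplex n,
        ((∏ j : Fin n,
            ((if _h : 0 < (j : ℕ) then
                w ⟨(j : ℕ) - 1, lt_of_le_of_lt (Nat.sub_le _ _) j.isLt⟩
              else 1) - w j) ^ α (Fin.castSucc j)) *
            (w ⟨n - 1, by omega⟩) ^ α (Fin.last n)) •
          ((List.ofFn fun j : Fin n =>
              duhamelKernel (α (Fin.castSucc j))
                ((((if _h : 0 < (j : ℕ) then
                      w ⟨(j : ℕ) - 1, lt_of_le_of_lt (Nat.sub_le _ _) j.isLt⟩
                    else 1) - w j : ℝ)) • M)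
                (fun _ => J) * Φ j).prod *
            duhamelKernel (α (Fin.last n)) ((w ⟨n - 1, by omega⟩ : ℝ) • M) (fun _ => J)) := by
  rw [duhamelKernel_eq_iterDuhamel, ofFn_eq_interleave_replicate J Φ α c hN hc1 hc2,
    ← setIntegral_blockIntegrand (continuous_propagator M) _ _ zero_le_one]
  congr 1
  funext w
  rw [blockIntegrand, simplexGap_last hn, ← smul_mul_smul_comm, prod_smul_prod_ofFn,
    smul_duhamelKernel_smul]
  simp_rw [simplexGap_castSucc, ← smul_mul_assoc, smul_duhamelKernel_smul]
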